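/- Let F be a quadratic APN function on F_{2^n}, L an F_2-linear map on F_{2^n}, and e₀ ∈ F_{2^n} with Tr(e₀) = 1. Then G(x) := F(x) + Tr(x)·L(x) is a (quadratic) APN function on F_{2^n} if and only if for every a ∈ T₀ := {x : Tr(x) = 0}, the map L_a : T₀ → F_{2^n} defined by L_a(x) = L(x) + B_F(x, a + e₀) is injective, where B_F(x,y) = F(x+y)+F(x)+F(y)+F(0). -/

import Mathlib

/-- `f` is almost perfect nonlinear. -/
def IsAPN {V W : Type*} [AddCommGroup V] [AddCommGroup W] (f : V → W) : Prop :=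
  ∀ a : V, a ≠ 0 → ∀ b : W, {x : V | f (x + a) + f x = b}.ncard ≤ 2

/-- `B_f(x,y) = f(x+y) + f(x) + f(y) + f(0)`. -/
def Bf {V W : Type*} [AddCommGroup V] [AddCommGroup W] (f : V → W) (x y : V) : W :=
  f (x + y) + f x + f y + f 0

/-- `f` is quadratic: `B_f` is `F_2`-bilinear. -/
def IsQuadratic {V W : Type*} [AddCommGroup V] [AddCommGroup W] (f : V → W) : Prop :=
  ∀ x₁ x₂ y : V, Bf f (x₁ + x₂) y = Bf f x₁ y + Bf f x₂ y

noncomputable def Tr (n : ℕ) : GaloisField 2 n → ZMod 2 :=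
  Algebra.trace (ZMod 2) (GaloisField 2 n)

/-!
Writing `G = F + Tr·L`, the form `B_G(x, y) = B_F(x, y) + Tr(x) L(y) + Tr(y) L(x)` is bilinear,
so `G` is quadratic, and a quadratic function is APN iff for every `a ≠ 0` the kernel of
`B_G(·, a)` is `{0, a}`. For `a, x ∈ T₀` the form `B_G` agrees with `B_F`, so that case is settled
by `F` being APN. The other cases reduce to `Tr a = 1` and `x ∈ T₀`, where `B_G(x, a)` is the
additive map `L_{a + e₀}` restricted to `T₀`, injective iff its kernel is trivial; and `a ↦ a + e₀`
is a bijection from `T₀` onto the elements of trace one.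
-/

open ZModModule

theorem zmod_two_eq_zero_or_one (t : ZMod 2) : t = 0 ∨ t = 1 := by
  revert t; decide

section QuadraticAPN

variable {V W : Type*} [AddCommGroup V] [AddCommGroup W] {f : V → W}

theorem Bf_comm (f : V → W) (x y : V) : Bf f x y = Bf f y x := by
  simp only [Bf, add_comm x y, add_right_comm _ (f x) (f y)]

theorem Bf_zero_left [Module (ZMod 2) W] (f : V → W) (y : V) : Bf f 0 y = 0 := by
  rw [Bf, zero_add, add_right_comm (f y), add_self, zero_add, add_self]

theorem Bf_self [Module (ZMod 2) V] [Module (ZMod 2) W] (f : V → W) (x : V) : Bf f x x = 0 := by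
  rw [Bf, add_self, add_assoc (f 0), add_self, add_zero, add_self]

theorem add_add_eq_add_add_iff_Bf_eq (f : V → W) (x y a : V) :
    f (x + a) + f x = f (y + a) + f y ↔ Bf f x a = Bf f y a := by
  rw [Bf, Bf, add_assoc _ (f a), add_assoc _ (f a), add_left_inj]

def IsQuadratic.bfLeft (hf : IsQuadratic f) (y : V) : V →+ W :=
  AddMonoidHom.mk' (fun x => Bf f x y) fun x₁ x₂ => hf x₁ x₂ y

theorem IsAPN.eq_zero_or_eq_of_Bf_eq_zero [Finite V] [Module (ZMod 2) V] [Module (ZMod 2) W]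
    (hf : IsAPN f) {a x : V} (ha : a ≠ 0) (hx : Bf f x a = 0) : x = 0 ∨ x = a := by
  by_contra! hne
  set S := {z : V | f (z + a) + f z = f (0 + a) + f 0}
  have hmem : ∀ z, Bf f z a = 0 → z ∈ S := fun z hz =>
    (add_add_eq_add_add_iff_Bf_eq f z 0 a).2 (by rw [hz, Bf_zero_left])
  have hsub : ({0, a, x} : Set V) ⊆ S := by
    rintro z (rfl | rfl | rfl)
    · exact hmem 0 (Bf_zero_left f a)
    · exact hmem z (Bf_self f z)
    · exact hmem z hx
  have hcard : ({0, a, x} : Set V).ncard = 3 := by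
    rw [Set.ncard_insert_of_notMem (by simp [ha.symm, hne.1.symm]), Set.ncard_pair hne.2.symm]
  have := (Set.ncard_le_ncard hsub (Set.toFinite S)).trans (hf a ha _)
  omega

theorem IsQuadratic.isAPN_of_Bf_eq_zero [Module (ZMod 2) V] [Module (ZMod 2) W]
    (hf : IsQuadratic f) (h : ∀ a ≠ 0, ∀ x, Bf f x a = 0 → x = 0 ∨ x = a) : IsAPN f := by
  intro a ha b
  obtain hS | ⟨x₀, hx₀⟩ := {x : V | f (x + a) + f x = b}.eq_empty_or_nonempty
  · simp [hS]
  have hsub : {x : V | f (x + a) + f x = b} ⊆ {x₀, x₀ + a} := by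
    intro x hx
    have hBf : Bf f (x + x₀) a = 0 := by
      rw [hf, (add_add_eq_add_add_iff_Bf_eq f x x₀ a).1 (hx.trans hx₀.symm), add_self]
    rcases h a ha _ hBf with h0 | h1
    · exact .inl (by rwa [← sub_eq_add, sub_eq_zero] at h0)
    · exact .inr (by rwa [← sub_eq_add, sub_eq_iff_eq_add'] at h1)
  exact (Set.ncard_le_ncard hsub (Set.toFinite _)).trans
    ((Set.ncard_insert_le _ _).trans (by rw [Set.ncard_singleton]))

theorem IsQuadratic.isAPN_iff [Finite V] [Module (ZMod 2) V] [Module (ZMod 2) W]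
    (hf : IsQuadratic f) :
    IsAPN f ↔ ∀ a ≠ 0, ∀ x, Bf f x a = 0 → x = 0 ∨ x = a :=
  ⟨fun h _ ha _ hx => h.eq_zero_or_eq_of_Bf_eq_zero ha hx, hf.isAPN_of_Bf_eq_zero⟩

end QuadraticAPN

section Twist

variable {V W : Type*} [AddCommGroup V] [Module (ZMod 2) V] [AddCommGroup W] [Module (ZMod 2) W]
  (f : V → W) (ℓ : V →ₗ[ZMod 2] ZMod 2) (L : V →ₗ[ZMod 2] W)

def twist : V → W := fun x => f x + ℓ x • L x

theorem Bf_twist (x y : V) : Bf (twist f ℓ L) x y = Bf f x y + ℓ x • L y + ℓ y • L x := by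
  have h : Bf (twist f ℓ L) x y = Bf f x y + ℓ x • L y + ℓ y • L x
      + ((ℓ x • L x + ℓ x • L x) + (ℓ y • L y + ℓ y • L y)) := by
    simp only [Bf, twist, map_add, map_zero, add_smul, smul_add, smul_zero]
    abel
  rwa [add_self, add_self, add_zero, add_zero] at h

variable {f}

theorem IsQuadratic.twist (hf : IsQuadratic f) : IsQuadratic (twist f ℓ L) := by
  intro x₁ x₂ y
  simp only [Bf_twist, hf x₁ x₂ y, map_add, add_smul, smul_add]
  abel

variable {ℓ L}

theorem Bf_twist_of_eq_zero {x y : V} (hx : ℓ x = 0) (hy : ℓ y = 0) :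
    Bf (twist f ℓ L) x y = Bf f x y := by
  simp [Bf_twist, hx, hy]

theorem Bf_twist_of_eq_zero_of_eq_one {x y : V} (hx : ℓ x = 0) (hy : ℓ y = 1) :
    Bf (twist f ℓ L) x y = L x + Bf f x y := by
  simp [Bf_twist, hx, hy, add_comm]

theorem isAPN_twist_iff [Finite V] (hf : IsQuadratic f) (hapn : IsAPN f) :
    IsAPN (twist f ℓ L) ↔ ∀ b, ℓ b = 1 → ∀ w, ℓ w = 0 → Bf (twist f ℓ L) w b = 0 → w = 0 := by
  have hg := hf.twist ℓ L
  rw [hg.isAPN_iff]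
  refine ⟨fun h b hb w hw hwb => ?_, fun h a ha x hx => ?_⟩
  · have hb0 : b ≠ 0 := by rintro rfl; simp at hb
    exact (h b hb0 w hwb).resolve_right (by rintro rfl; simp [hw] at hb)
  rcases zmod_two_eq_zero_or_one (ℓ a) with ha0 | ha1 <;>
    rcases zmod_two_eq_zero_or_one (ℓ x) with hx0 | hx1
  · rw [Bf_twist_of_eq_zero hx0 ha0] at hx
    exact hapn.eq_zero_or_eq_of_Bf_eq_zero ha hx
  · exact (ha (h x hx1 a ha0 (by rwa [Bf_comm]))).elim
  · exact .inl (h a ha1 x hx0 hx)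
  · -- `x + a` lies in the kernel of `ℓ` and still pairs to zero with `a`
    have hxa := h a ha1 (x + a) (by rw [map_add, hx1, ha1]; rfl) (by rw [hg, hx, Bf_self, add_zero])
    exact .inr (by rwa [← sub_eq_add, sub_eq_zero] at hxa)

theorem injOn_add_Bf_iff (hf : IsQuadratic f) {b : V} (hb : ℓ b = 1) :
    Set.InjOn (fun x => L x + Bf f x b) {x | ℓ x = 0} ↔
      ∀ w, ℓ w = 0 → Bf (twist f ℓ L) w b = 0 → w = 0 := by
  rw [Set.EqOn.injOn_iff (s := {x | ℓ x = 0}) (f₂ := fun x => Bf (twist f ℓ L) x b)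
    fun x hx => (Bf_twist_of_eq_zero_of_eq_one hx hb).symm]
  exact Set.injOn_iff_map_eq_zero ((hf.twist ℓ L).bfLeft b) (LinearMap.ker ℓ)

theorem forall_apply_eq_one_iff {e : V} (he : ℓ e = 1) {P : V → Prop} :
    (∀ b, ℓ b = 1 → P b) ↔ ∀ a, ℓ a = 0 → P (a + e) := by
  refine ⟨fun h a ha => h _ (by rw [map_add, ha, he, zero_add]), fun h b hb => ?_⟩
  simpa [add_assoc, add_self] using h (b + e) (by rw [map_add, hb, he]; rfl)

end Twist

theorem stmt8 (n : ℕ)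
    (F : GaloisField 2 n → GaloisField 2 n)
    (hFq : IsQuadratic F) (hFAPN : IsAPN F)
    (L : GaloisField 2 n →ₗ[ZMod 2] GaloisField 2 n)
    (e₀ : GaloisField 2 n) (he₀ : Tr n e₀ = 1)
    (G : GaloisField 2 n → GaloisField 2 n)
    (hG : ∀ x, G x = F x + Tr n x • L x) :
    (IsQuadratic G ∧ IsAPN G) ↔
      ∀ a : GaloisField 2 n, Tr n a = 0 →
        Set.InjOn (fun x => L x + Bf F x (a + e₀)) {x : GaloisField 2 n | Tr n x = 0} := by
  obtain rfl : G = twist F (Algebra.trace (ZMod 2) _) L := funext hG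
  simp only [Tr] at he₀ ⊢
  rw [and_iff_right (hFq.twist _ L), isAPN_twist_iff hFq hFAPN, forall_apply_eq_one_iff he₀]
  refine forall₂_congr fun a ha => (injOn_add_Bf_iff hFq ?_).symm
  rw [map_add, ha, he₀, zero_add]
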